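/- Let T be a list of natural numbers, all < 2^k, let 0 ≤ ℓ ≤ k and 0 ≤ i < |T|. Set bp = prefix(ℓ, S_ℓ(T)[i]), startWT = |{j < |T| : prefix(ℓ, T[j]) < bp}|, startWM = |{j < |T| : rev_ℓ(prefix(ℓ, T[j])) < rev_ℓ(bp)}|, and j = startWM + (i − startWT). Then startWT ≤ i and R_ℓ(T)[j] = S_ℓ(T)[i]; in particular BV_ℓ(T)[j] = BVT_ℓ(T)[i], i.e., the bit at position i on level ℓ of the wavelet tree equals the bit at position j on level ℓ of the wavelet matrix. (Core of the wavelet-tree-to-wavelet-matrix transformation.) -/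

import Mathlib

/-- `brev m c`: the number whose `m`-bit binary representation is the reverse of that of `c`
(bit-reversal `rev_m`). -/
def brev (m c : ℕ) : ℕ := ∑ j ∈ Finset.range m, ((c / 2^j) % 2) * 2^(m-1-j)

/-- `bpre k ℓ c`: the bit prefix of length `ℓ` of a `k`-bit number `c`
(its `ℓ` most significant bits). -/
def bpre (k ℓ c : ℕ) : ℕ := c / 2^(k-ℓ)

/-- `wbit k j c`: the `j`-th bit (from MSB to LSB) of the `k`-bit number `c`. -/
def wbit (k j c : ℕ) : ℕ := (c / 2^(k-1-j)) % 2

/-- Level-`ℓ` stable prefix sort `S_ℓ(T)`: concatenation over `p = 0,…,2^ℓ-1` of the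
sublists of `T` whose length-`ℓ` bit prefix equals `p`. -/
def wsortS (k ℓ : ℕ) (T : List ℕ) : List ℕ :=
  (List.range (2^ℓ)).flatMap (fun p => T.filter (fun c => bpre k ℓ c = p))

/-- Level-`ℓ` stable reversed-prefix sort `R_ℓ(T)`: concatenation over `v = 0,…,2^ℓ-1` of the
sublists of `T` whose reversed length-`ℓ` bit prefix equals `v`. -/
def wsortR (k ℓ : ℕ) (T : List ℕ) : List ℕ :=
  (List.range (2^ℓ)).flatMap (fun v => T.filter (fun c => brev ℓ (bpre k ℓ c) = v))

/-- `wrank b B i`: number of occurrences of `b` among the first `i` entries of `B`. -/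
def wrank (b : ℕ) (B : List ℕ) (i : ℕ) : ℕ := ((B.take i).filter (fun x => x = b)).length

/-- `wselect b B i`: 0-based position in `B` of the `i`-th occurrence of `b`
(occurrences counted starting from `i = 1`). -/
def wselect (b : ℕ) (B : List ℕ) (i : ℕ) : ℕ :=
  ((List.range B.length).filter (fun j => B.getD j 2 = b)).getD (i-1) 0

/-- Unary histogram bit vector `U(T)` of a text over alphabet `[0,σ)`:
`1^{m_0} 0 1^{m_1} 0 ⋯ 0 1^{m_{σ-1}}` where `m_c` is the number of occurrences of `c` in `T`. -/
def unaryHist (σ : ℕ) (T : List ℕ) : List ℕ :=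
  List.intercalate [0] ((List.range σ).map (fun c => List.replicate (T.count c) 1))


section WtWmAux

private lemma brev_succ' (m c : ℕ) : brev (m+1) c = (c % 2) * 2^m + brev m (c / 2) := by
  unfold brev
  rw [Finset.sum_range_succ']
  rw [add_comm]
  congr 1
  · simp
  · apply Finset.sum_congr rfl
    intro j hj
    have h1 : c / 2 ^ (j + 1) = c / 2 / 2 ^ j := by
      rw [Nat.div_div_eq_div_mul, pow_succ, mul_comm]
    have h2 : m + 1 - 1 - (j + 1) = m - 1 - j := by omega
    rw [h1, h2]

private lemma brev_lt' (m c : ℕ) : brev m c < 2^m := by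
  induction m generalizing c with
  | zero => simp [brev]
  | succ m ih =>
    rw [brev_succ']
    have h1 : c % 2 ≤ 1 := by omega
    have h2 := ih (c / 2)
    have : (c % 2) * 2^m ≤ 2^m := by
      calc (c % 2) * 2^m ≤ 1 * 2^m := Nat.mul_le_mul_right _ h1
      _ = 2^m := one_mul _
    rw [pow_succ]
    omega

private lemma brev_inj' (m a b : ℕ) (ha : a < 2^m) (hb : b < 2^m)
    (h : brev m a = brev m b) : a = b := by
  induction m generalizing a b with
  | zero => simp at ha hb; omega
  | succ m ih =>
    rw [brev_succ', brev_succ'] at h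
    have h1 := brev_lt' m (a / 2)
    have h2 := brev_lt' m (b / 2)
    have key : a % 2 = b % 2 ∧ brev m (a/2) = brev m (b/2) := by
      rcases Nat.mod_two_eq_zero_or_one a with h3 | h3 <;>
        rcases Nat.mod_two_eq_zero_or_one b with h4 | h4 <;>
          rw [h3, h4] at h <;> simp at h <;> omega
    have hdiv : a / 2 = b / 2 := by
      apply ih
      · have : a < 2 * 2^m := by rw [← pow_succ']; exact ha
        omega
      · have : b < 2 * 2^m := by rw [← pow_succ']; exact hb
        omega
      · exact key.2
    omega

private lemma filter_len_succ' (f : ℕ → ℕ) (p : ℕ) (T : List ℕ) :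
    (T.filter (fun c => f c < p+1)).length
      = (T.filter (fun c => f c < p)).length + (T.filter (fun c => f c = p)).length := by
  induction T with
  | nil => simp
  | cons a t ih =>
    simp only [List.filter_cons]
    by_cases h1 : f a < p + 1 <;> by_cases h2 : f a < p <;> by_cases h3 : f a = p <;>
      simp [h1, h2, h3] at ih ⊢ <;> omega

private lemma len_lt' (f : ℕ → ℕ) (T : List ℕ) (p : ℕ) :
    ((List.range p).flatMap (fun q => T.filter (fun c => f c = q))).length
      = (T.filter (fun c => f c < p)).length := by
  induction p with
  | zero => simp
  | succ p ih =>
    rw [List.range_succ, List.flatMap_append, List.length_append, ih, filter_len_succ']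
    simp

private lemma getD_block' (f : ℕ → ℕ) (T : List ℕ) (n p : ℕ) (hp : p < n) (t : ℕ)
    (ht : t < (T.filter (fun c => f c = p)).length) :
    ((List.range n).flatMap (fun q => T.filter (fun c => f c = q))).getD
      ((T.filter (fun c => f c < p)).length + t) 0
      = (T.filter (fun c => f c = p)).getD t 0 := by
  obtain ⟨r, rfl⟩ : ∃ r, n = (p+1) + r := ⟨n - (p+1), by omega⟩
  rw [List.range_add, List.flatMap_append]
  rw [List.getD_append]
  · rw [List.range_succ, List.flatMap_append]
    rw [List.getD_append_right _ _ _ _ (by rw [len_lt']; exact Nat.le_add_right _ _)]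
    rw [len_lt', Nat.add_sub_cancel_left]
    simp
  · rw [len_lt' f T (p+1), filter_len_succ']
    omega

private lemma flat_index' (f : ℕ → ℕ) (T : List ℕ) (n i : ℕ)
    (hi : i < ((List.range n).flatMap (fun q => T.filter (fun c => f c = q))).length) :
    ∃ p, p < n ∧ (T.filter (fun c => f c < p)).length ≤ i ∧
      i - (T.filter (fun c => f c < p)).length < (T.filter (fun c => f c = p)).length ∧
      f (((List.range n).flatMap (fun q => T.filter (fun c => f c = q))).getD i 0) = p := by
  induction n with
  | zero => simp at hi
  | succ n ih =>
    rw [List.range_succ, List.flatMap_append] at hi ⊢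
    by_cases h : i < ((List.range n).flatMap (fun q => T.filter (fun c => f c = q))).length
    · obtain ⟨p, hp, h1, h2, h3⟩ := ih h
      exact ⟨p, Nat.lt_succ_of_lt hp, h1, h2, by rw [List.getD_append _ _ _ _ h]; exact h3⟩
    · push_neg at h
      refine ⟨n, Nat.lt_succ_self n, ?_, ?_, ?_⟩
      · rw [← len_lt' f T n]; exact h
      · rw [← len_lt' f T n]
        rw [List.length_append] at hi
        simp only [List.flatMap_cons, List.flatMap_nil, List.append_nil] at hi
        omega
      · rw [List.getD_append_right _ _ _ _ h]
        simp only [List.flatMap_cons, List.flatMap_nil, List.append_nil]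
        have hlt : i - ((List.range n).flatMap (fun q => T.filter (fun c => f c = q))).length
            < (T.filter (fun c => f c = n)).length := by
          rw [List.length_append] at hi
          simp only [List.flatMap_cons, List.flatMap_nil, List.append_nil] at hi
          omega
        rw [List.getD_eq_getElem _ _ hlt]
        have hmem := List.getElem_mem hlt
        have := List.mem_filter.1 hmem
        exact of_decide_eq_true this.2

end WtWmAux

theorem wt_to_wm (k : ℕ) (hk : 1 ≤ k) (T : List ℕ) (hT : ∀ c ∈ T, c < 2^k)
    (ℓ i : ℕ) (hℓ : ℓ ≤ k) (hi : i < T.length) :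
    let bp := bpre k ℓ ((wsortS k ℓ T).getD i 0)
    let startWT := (T.filter (fun c => bpre k ℓ c < bp)).length
    let startWM := (T.filter (fun c => brev ℓ (bpre k ℓ c) < brev ℓ bp)).length
    let j := startWM + (i - startWT)
    startWT ≤ i ∧ (wsortR k ℓ T).getD j 0 = (wsortS k ℓ T).getD i 0 ∧
      ((wsortR k ℓ T).map (fun c => wbit k ℓ c)).getD j 2 =
        ((wsortS k ℓ T).map (fun c => wbit k ℓ c)).getD i 2 := by
  have hbp_lt : ∀ c ∈ T, bpre k ℓ c < 2^ℓ := by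
    intro c hc
    unfold bpre
    rw [Nat.div_lt_iff_lt_mul (pow_pos (by norm_num : (0:ℕ) < 2) (k-ℓ))]
    calc c < 2^k := hT c hc
    _ = 2^ℓ * 2^(k-ℓ) := by rw [← pow_add]; congr 1; omega
  have hSlen : ((List.range (2^ℓ)).flatMap
      (fun p => T.filter (fun c => bpre k ℓ c = p))).length = T.length := by
    rw [len_lt' (fun c => bpre k ℓ c) T (2^ℓ)]
    rw [List.filter_eq_self.2 (fun c hc => decide_eq_true (hbp_lt c hc))]
  have hRlen : ((List.range (2^ℓ)).flatMap
      (fun v => T.filter (fun c => brev ℓ (bpre k ℓ c) = v))).length = T.length := by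
    rw [len_lt' (fun c => brev ℓ (bpre k ℓ c)) T (2^ℓ)]
    rw [List.filter_eq_self.2 (fun c hc => decide_eq_true (brev_lt' ℓ _))]
  simp only [wsortS, wsortR]
  have hiS : i < ((List.range (2^ℓ)).flatMap
      (fun p => T.filter (fun c => bpre k ℓ c = p))).length := by rw [hSlen]; exact hi
  obtain ⟨p, hp, h1, h2, h3⟩ := flat_index' (fun c => bpre k ℓ c) T (2^ℓ) i hiS
  simp only [h3]
  refine ⟨h1, ?_⟩
  have hfeq : T.filter (fun c => brev ℓ (bpre k ℓ c) = brev ℓ p)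
      = T.filter (fun c => bpre k ℓ c = p) := by
    apply List.filter_congr
    intro c hc
    simp only [decide_eq_decide]
    exact ⟨fun h => brev_inj' ℓ _ _ (hbp_lt c hc) hp h, fun h => by rw [h]⟩
  have key1 : ((List.range (2^ℓ)).flatMap
      (fun q => T.filter (fun c => bpre k ℓ c = q))).getD i 0
      = (T.filter (fun c => bpre k ℓ c = p)).getD
          (i - (T.filter (fun c => bpre k ℓ c < p)).length) 0 := by
    have := getD_block' (fun c => bpre k ℓ c) T (2^ℓ) p hp
      (i - (T.filter (fun c => bpre k ℓ c < p)).length) h2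
    rwa [Nat.add_sub_cancel' h1] at this
  have key2 : ((List.range (2^ℓ)).flatMap
      (fun v => T.filter (fun c => brev ℓ (bpre k ℓ c) = v))).getD
      ((T.filter (fun c => brev ℓ (bpre k ℓ c) < brev ℓ p)).length
        + (i - (T.filter (fun c => bpre k ℓ c < p)).length)) 0
      = (T.filter (fun c => bpre k ℓ c = p)).getD
          (i - (T.filter (fun c => bpre k ℓ c < p)).length) 0 := by
    have := getD_block' (fun c => brev ℓ (bpre k ℓ c)) T (2^ℓ) (brev ℓ p)
      (brev_lt' ℓ p) (i - (T.filter (fun c => bpre k ℓ c < p)).length)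
      (by rw [hfeq]; exact h2)
    rwa [hfeq] at this
  have hmain : ((List.range (2^ℓ)).flatMap
      (fun v => T.filter (fun c => brev ℓ (bpre k ℓ c) = v))).getD
      ((T.filter (fun c => brev ℓ (bpre k ℓ c) < brev ℓ p)).length
        + (i - (T.filter (fun c => bpre k ℓ c < p)).length)) 0
      = ((List.range (2^ℓ)).flatMap
          (fun q => T.filter (fun c => bpre k ℓ c = q))).getD i 0 := by
    rw [key2, key1]
  refine ⟨hmain, ?_⟩
  have hjR : (T.filter (fun c => brev ℓ (bpre k ℓ c) < brev ℓ p)).length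
      + (i - (T.filter (fun c => bpre k ℓ c < p)).length)
      < ((List.range (2^ℓ)).flatMap
          (fun v => T.filter (fun c => brev ℓ (bpre k ℓ c) = v))).length := by
    rw [hRlen]
    have hb : (i - (T.filter (fun c => bpre k ℓ c < p)).length)
        < (T.filter (fun c => brev ℓ (bpre k ℓ c) = brev ℓ p)).length := by
      rw [hfeq]; exact h2
    have := filter_len_succ' (fun c => brev ℓ (bpre k ℓ c)) (brev ℓ p) T
    have hle := List.length_filter_le
      (fun c => decide (brev ℓ (bpre k ℓ c) < brev ℓ p + 1)) T
    omega
  rw [List.getD_eq_getElem _ _ (by rw [List.length_map]; exact hjR),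
      List.getElem_map,
      List.getD_eq_getElem _ _ (by rw [List.length_map]; exact hiS),
      List.getElem_map]
  congr 1
  rw [← List.getD_eq_getElem _ 0 hjR, ← List.getD_eq_getElem _ 0 hiS]
  exact hmain
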